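/- arXiv:1502.07928 — 3 statements merged into one kernel-verified Lean document; each statement's English description precedes it below -/
import Mathlib

section
/- Non-Archimedean Gram–Schmidt process: Let (C, ℓ) be an orthogonalizable Λ-space and let {x_1, …, x_r} be a basis for a subspace V ≤ C. Then there exists an orthogonal ordered basis (x_1', …, x_r') for V whose members have the form x_1' = x_1 and, for j ≥ 2, x_j' = x_j − λ_{j,j−1} x_{j−1} − … − λ_{j,1} x_1 for some constants λ_{j,β} ∈ Λ. Moreover, if the first i elements (x_1, …, x_i) of the initial basis are orthogonal, then one can take x_j' = x_j for j = 1, …, i. -/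
/-!
Formalization setup following Usher–Zhang, "Persistent homology and Floer–Novikov theory".

We fix an additive subgroup `Γ ≤ ℝ` and abstract the Novikov field `Λ = Λ^{K,Γ}` as a field
`Λ` equipped with a valuation `ν : Λ → ℝ ∪ {∞}` (encoded in `EReal`, with `ν x = ⊤ ↔ x = 0`)
satisfying (V1),(V2),(V3), whose values on nonzero elements lie in (and fill out) `Γ`.

Filtration functions `ℓ : C → ℝ ∪ {-∞}` are encoded as `EReal`-valued functions which never
take the value `⊤`, with `ℓ x = ⊥ ↔ x = 0`.
-/

noncomputable section

/-- The Novikov field `Λ^{K,Γ}` together with its valuation `ν(Σ a_g T^g) = min {g : a_g ≠ 0}`: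
a field `Λ` with a function `ν : Λ → ℝ ∪ {∞}` such that (V1) `ν x = ∞ ↔ x = 0`,
(V2) `ν (xy) = ν x + ν y`, (V3) `ν (x+y) ≥ min (ν x) (ν y)`, and the values of `ν` on
nonzero elements are exactly the elements of `Γ`. -/
structure NovikovStructure (Γ : AddSubgroup ℝ) (Λ : Type*) [Field Λ] where
  ν : Λ → EReal
  ν_eq_top_iff : ∀ x : Λ, ν x = ⊤ ↔ x = 0
  ν_mul : ∀ x y : Λ, ν (x * y) = ν x + ν y
  min_le_ν_add : ∀ x y : Λ, min (ν x) (ν y) ≤ ν (x + y)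
  ν_mem : ∀ x : Λ, x ≠ 0 → ∃ g : Γ, ν x = ((g : ℝ) : EReal)
  ν_surj : ∀ g : Γ, ∃ x : Λ, ν x = ((g : ℝ) : EReal)

/-- `(C, ℓ)` is a non-Archimedean normed vector space over `Λ` (Definition 2.2):
(F1) `ℓ x = -∞ ↔ x = 0`; (F2) `ℓ (λ • x) = ℓ x - ν λ`; (F3) `ℓ (x+y) ≤ max (ℓ x) (ℓ y)`. -/
structure IsNonArchNorm {Γ : AddSubgroup ℝ} {Λ : Type*} [Field Λ] (NS : NovikovStructure Γ Λ)
    {C : Type*} [AddCommGroup C] [Module Λ C] (ℓ : C → EReal) : Prop where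
  eq_bot_iff : ∀ x : C, ℓ x = ⊥ ↔ x = 0
  ne_top : ∀ x : C, ℓ x ≠ ⊤
  smul_eq : ∀ (a : Λ) (x : C), ℓ (a • x) = ℓ x - NS.ν a
  add_le : ∀ x y : C, ℓ (x + y) ≤ max (ℓ x) (ℓ y)

/-- A finite ordered family `(w i)` in `(C, ℓ)` is orthogonal:
`ℓ (∑ λᵢ • wᵢ) = maxᵢ ℓ (λᵢ • wᵢ)` for all coefficients `λᵢ ∈ Λ` (Definition 2.8). -/
def IsOrthFamily (Λ : Type*) [Field Λ] {C : Type*} [AddCommGroup C] [Module Λ C]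
    (ℓ : C → EReal) {ι : Type*} [Fintype ι] (w : ι → C) : Prop :=
  ∀ a : ι → Λ, ℓ (∑ i, a i • w i) = ⨆ i, ℓ (a i • w i)

/-- Two subspaces `V, W` of `(C, ℓ)` are orthogonal if
`ℓ (v + w) = max (ℓ v) (ℓ w)` for all `v ∈ V`, `w ∈ W` (Definition 2.8). -/
def AreOrthogonal {Λ : Type*} [Field Λ] {C : Type*} [AddCommGroup C] [Module Λ C]
    (ℓ : C → EReal) (V W : Submodule Λ C) : Prop :=
  ∀ v ∈ V, ∀ w ∈ W, ℓ (v + w) = max (ℓ v) (ℓ w)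

/-- An orthogonalizable `Λ`-space: a finite-dimensional non-Archimedean normed `Λ`-vector
space admitting an orthogonal (finite) basis. -/
def IsOrthogonalizable {Γ : AddSubgroup ℝ} {Λ : Type*} [Field Λ] (NS : NovikovStructure Γ Λ)
    {C : Type*} [AddCommGroup C] [Module Λ C] (ℓ : C → EReal) : Prop :=
  IsNonArchNorm NS ℓ ∧ ∃ (n : ℕ) (b : Module.Basis (Fin n) Λ C), IsOrthFamily Λ ℓ ⇑b

/-!
An orthogonal basis `e` of `C` gives every subspace `W` an orthogonal complement cut out by
coordinates: adjoining `u = v + y` to `W` (with `v ∈ W` and `y ≠ 0` in the current complement)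
costs one pivot, a coordinate `j` with `ℓ y = ℓ (yⱼ • eⱼ)`. Hence every `x` has a best
approximation `v₀ ∈ W`: no element of `W` shortens `x - v₀`. Gram–Schmidt replaces `x j` by
`x j - v j` with `v j` a best approximation from the span of the `x b`, `b < j` (taken to be `0`
along the orthogonal initial segment), and a family none of whose members is shortened by its
predecessors is orthogonal.
-/

open Set Submodule

section SpanImage

variable {R M ι : Type*} [Ring R] [AddCommGroup M] [Module R M]

theorem span_image_Iio_eq_of_sub_mem [Preorder ι] [WellFoundedLT ι] {x x' : ι → M}
    (h : ∀ j, x' j - x j ∈ span R (x '' Iio j)) (j : ι) :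
    span R (x' '' Iio j) = span R (x '' Iio j) := by
  induction j using WellFoundedLT.induction with
  | ind j ih =>
  have hmono : ∀ (y : ι → M) {b}, b < j → span R (y '' Iio b) ≤ span R (y '' Iio j) :=
    fun y b hb => span_mono (image_mono fun c hc => lt_trans hc hb)
  refine le_antisymm (span_le.2 ?_) (span_le.2 ?_) <;> rintro _ ⟨b, hb, rfl⟩
  · rw [← add_sub_cancel (x b) (x' b)]
    exact add_mem (subset_span (mem_image_of_mem x hb)) (hmono x hb (h b))
  · rw [← sub_sub_cancel (x' b) (x b)]
    refine sub_mem (subset_span (mem_image_of_mem x' hb)) (hmono x' hb ?_)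
    rw [ih b hb]
    exact h b

theorem span_range_eq_of_sub_mem [Preorder ι] [WellFoundedLT ι] {x x' : ι → M}
    (h : ∀ j, x' j - x j ∈ span R (x '' Iio j)) : span R (range x') = span R (range x) := by
  have hIio : ∀ (y : ι → M) j, span R (y '' Iio j) ≤ span R (range y) :=
    fun y j => span_mono (image_subset_range y _)
  refine le_antisymm (span_le.2 ?_) (span_le.2 ?_) <;> rintro _ ⟨j, rfl⟩
  · rw [← add_sub_cancel (x j) (x' j)]
    exact add_mem (subset_span (mem_range_self j)) (hIio x j (h j))
  · rw [← sub_sub_cancel (x' j) (x j)]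
    refine sub_mem (subset_span (mem_range_self j)) (hIio x' j ?_)
    rw [span_image_Iio_eq_of_sub_mem h]
    exact h j

theorem exists_sum_eq_of_mem_span_image [Fintype ι] {x : ι → M} {s : Set ι} {v : M}
    (hv : v ∈ span R (x '' s)) : ∃ c : ι → R, (∀ i ∉ s, c i = 0) ∧ ∑ i, c i • x i = v := by
  obtain ⟨l, hl, rfl⟩ := (Finsupp.mem_span_image_iff_linearCombination R).1 hv
  refine ⟨l, fun i hi => Finsupp.notMem_support_iff.1 fun h => hi (hl h), ?_⟩
  rw [Finsupp.linearCombination_apply, Finsupp.sum_fintype _ _ fun i => zero_smul R (x i)]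

theorem exists_eq_sum_ite_of_mem_span_image_Iio {r : ℕ} {x : Fin r → M} {j : Fin r} {v : M}
    (hv : v ∈ span R (x '' Iio j)) :
    ∃ lam : Fin r → R, v = ∑ b : Fin r, if (b : ℕ) < (j : ℕ) then lam b • x b else 0 := by
  obtain ⟨c, hc, rfl⟩ := exists_sum_eq_of_mem_span_image hv
  refine ⟨c, Finset.sum_congr rfl fun b _ => ?_⟩
  split_ifs with hb
  · rfl
  · rw [hc b hb, zero_smul]

end SpanImage

namespace NovikovStructure

variable {Γ : AddSubgroup ℝ} {Λ : Type*} [Field Λ] (NS : NovikovStructure Γ Λ)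

theorem ν_one : NS.ν 1 = 0 := by
  obtain ⟨g, hg⟩ := NS.ν_mem 1 one_ne_zero
  have h : NS.ν (1 : Λ) = NS.ν 1 + NS.ν 1 := by rw [← NS.ν_mul, one_mul]
  rw [hg] at h ⊢
  have : (g : ℝ) = g + g := by exact_mod_cast h
  exact_mod_cast (by linarith : (g : ℝ) = 0)

theorem ν_neg_one : NS.ν (-1) = 0 := by
  obtain ⟨g, hg⟩ := NS.ν_mem (-1 : Λ) (neg_ne_zero.2 one_ne_zero)
  have h : NS.ν (1 : Λ) = NS.ν (-1) + NS.ν (-1) := by rw [← NS.ν_mul, neg_one_mul, neg_neg]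
  rw [NS.ν_one, hg] at h
  rw [hg]
  have : (0 : ℝ) = g + g := by exact_mod_cast h
  exact_mod_cast (by linarith : (g : ℝ) = 0)

end NovikovStructure

section NonArchimedean

variable {Γ : AddSubgroup ℝ} {Λ : Type*} [Field Λ] {NS : NovikovStructure Γ Λ}
  {C : Type*} [AddCommGroup C] [Module Λ C] {ℓ : C → EReal}

namespace IsNonArchNorm

variable (hN : IsNonArchNorm NS ℓ)
include hN

theorem map_zero : ℓ 0 = ⊥ := (hN.eq_bot_iff 0).2 rfl

theorem map_neg (x : C) : ℓ (-x) = ℓ x := by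
  rw [← neg_one_smul Λ x, hN.smul_eq, NS.ν_neg_one, sub_zero]

theorem sub_le (x y : C) : ℓ (x - y) ≤ max (ℓ x) (ℓ y) := by
  simpa only [sub_eq_add_neg, hN.map_neg] using hN.add_le x (-y)

theorem sum_le {ι : Type*} (s : Finset ι) (z : ι → C) {B : EReal}
    (h : ∀ i ∈ s, ℓ (z i) ≤ B) : ℓ (∑ i ∈ s, z i) ≤ B := by
  classical
  induction s using Finset.induction_on with
  | empty => simp [hN.map_zero]
  | insert a s ha ih =>
    rw [Finset.sum_insert ha]
    exact (hN.add_le _ _).trans <| max_le (h a (Finset.mem_insert_self a s))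
      (ih fun i hi => h i (Finset.mem_insert_of_mem hi))

theorem smul_le_smul {x y : C} (h : ℓ x ≤ ℓ y) (a : Λ) : ℓ (a • x) ≤ ℓ (a • y) := by
  rw [hN.smul_eq, hN.smul_eq]
  exact EReal.sub_le_sub h le_rfl

theorem areOrthogonal_of_le_add {V W : Submodule Λ C}
    (h : ∀ v ∈ V, ∀ w ∈ W, ℓ w ≤ ℓ (v + w)) : AreOrthogonal ℓ V W := by
  intro v hv w hw
  have hv' : ℓ v ≤ ℓ (v + w) := by
    calc ℓ v = ℓ (v + w - w) := by rw [add_sub_cancel_right]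
      _ ≤ max (ℓ (v + w)) (ℓ w) := hN.sub_le _ _
      _ = ℓ (v + w) := max_eq_left (h v hv w hw)
  exact le_antisymm (hN.add_le v w) (max_le hv' (h v hv w hw))

theorem areOrthogonal_span_singleton {V : Submodule Λ C} {y : C}
    (hy : ∀ v ∈ V, ℓ y ≤ ℓ (y + v)) : AreOrthogonal ℓ V (Λ ∙ y) := by
  refine hN.areOrthogonal_of_le_add fun v hv w hw => ?_
  obtain ⟨t, rfl⟩ := mem_span_singleton.1 hw
  rcases eq_or_ne t 0 with rfl | ht
  · simp [hN.map_zero]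
  calc ℓ (t • y) ≤ ℓ (t • (y + t⁻¹ • v)) := hN.smul_le_smul (hy _ (V.smul_mem _ hv)) t
    _ = ℓ (v + t • y) := by rw [smul_add, smul_inv_smul₀ ht, add_comm]

end IsNonArchNorm

theorem IsOrthFamily.le_sum {ι : Type*} [Fintype ι] {w : ι → C} (hw : IsOrthFamily Λ ℓ w)
    (a : ι → Λ) (i : ι) : ℓ (a i • w i) ≤ ℓ (∑ i, a i • w i) :=
  hw a ▸ le_iSup (fun i => ℓ (a i • w i)) i

theorem IsNonArchNorm.isOrthFamily_iff (hN : IsNonArchNorm NS ℓ) {ι : Type*} [Fintype ι]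
    {w : ι → C} : IsOrthFamily Λ ℓ w ↔ ∀ (a : ι → Λ) (i : ι), ℓ (a i • w i) ≤ ℓ (∑ i, a i • w i) :=
  ⟨IsOrthFamily.le_sum, fun h a => le_antisymm
    (hN.sum_le _ _ fun i _ => le_iSup (fun i => ℓ (a i • w i)) i) (iSup_le (h a))⟩

namespace IsOrthFamily

variable {ι : Type*} [Fintype ι] {e : Module.Basis ι Λ C}

theorem apply_eq_iSup_repr (he : IsOrthFamily Λ ℓ ⇑e) (z : C) :
    ℓ z = ⨆ j, ℓ (e.repr z j • e j) := by
  simpa only [e.sum_repr] using he (e.repr z)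

theorem repr_smul_le (he : IsOrthFamily Λ ℓ ⇑e) (z : C) (j : ι) : ℓ (e.repr z j • e j) ≤ ℓ z :=
  he.apply_eq_iSup_repr z ▸ le_iSup (fun j => ℓ (e.repr z j • e j)) j

theorem exists_pivot (hN : IsNonArchNorm NS ℓ) (he : IsOrthFamily Λ ℓ ⇑e) {z : C} (hz : z ≠ 0) :
    ∃ j, e.repr z j ≠ 0 ∧ ℓ z = ℓ (e.repr z j • e j) := by
  have hz' : ℓ z ≠ ⊥ := fun h => hz ((hN.eq_bot_iff z).1 h)
  cases isEmpty_or_nonempty ι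
  · exact absurd (by rw [he.apply_eq_iSup_repr z, iSup_of_empty]) hz'
  obtain ⟨j, hj⟩ := exists_eq_ciSup_of_finite (f := fun j => ℓ (e.repr z j • e j))
  rw [← he.apply_eq_iSup_repr] at hj
  refine ⟨j, fun h0 => hz' ?_, hj.symm⟩
  rw [← hj, h0, zero_smul, hN.map_zero]

theorem le_add_smul_of_pivot (hN : IsNonArchNorm NS ℓ) (he : IsOrthFamily Λ ℓ ⇑e) {y z : C}
    {j : ι} (hy : ℓ y = ℓ (e.repr y j • e j)) (hz : e.repr z j = 0) (t : Λ) :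
    ℓ z ≤ ℓ (z + t • y) := by
  have hty : ℓ (t • y) ≤ ℓ (z + t • y) :=
    calc ℓ (t • y) = ℓ (t • (e.repr y j • e j)) := by rw [hN.smul_eq, hN.smul_eq, hy]
      _ = ℓ (e.repr (z + t • y) j • e j) := by simp [hz, mul_smul]
      _ ≤ ℓ (z + t • y) := he.repr_smul_le _ j
  calc ℓ z = ℓ (z + t • y - t • y) := by rw [add_sub_cancel_right]
    _ ≤ max (ℓ (z + t • y)) (ℓ (t • y)) := hN.sub_le _ _
    _ = ℓ (z + t • y) := max_eq_left hty

end IsOrthFamily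

/-- The span of the basis vectors `e j` with `j ∉ P`. -/
def Module.Basis.coordKer {ι R M : Type*} [Semiring R] [AddCommMonoid M] [Module R M]
    (e : Module.Basis ι R M) (P : Finset ι) : Submodule R M :=
  ⨅ p ∈ P, LinearMap.ker (e.coord p)

@[simp]
theorem Module.Basis.mem_coordKer {ι R M : Type*} [Semiring R] [AddCommMonoid M] [Module R M]
    (e : Module.Basis ι R M) {P : Finset ι} {z : M} :
    z ∈ e.coordKer P ↔ ∀ p ∈ P, e.repr z p = 0 := by
  simp [Module.Basis.coordKer]

section Complement

variable {ι : Type*} [Fintype ι] {e : Module.Basis ι Λ C}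
  (hN : IsNonArchNorm NS ℓ) (he : IsOrthFamily Λ ℓ ⇑e)
include hN he

theorem exists_coordKer_complement_sup_span_singleton {W : Submodule Λ C} {P : Finset ι}
    (hsup : W ⊔ e.coordKer P = ⊤) (horth : AreOrthogonal ℓ W (e.coordKer P)) (u : C) :
    ∃ P' : Finset ι, (Λ ∙ u ⊔ W) ⊔ e.coordKer P' = ⊤ ∧
      AreOrthogonal ℓ (Λ ∙ u ⊔ W) (e.coordKer P') := by
  classical
  have hdecomp : ∀ x, ∃ v ∈ W, ∃ y ∈ e.coordKer P, v + y = x := fun x =>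
    mem_sup.1 (hsup ▸ mem_top)
  obtain ⟨v₀, hv₀, y, hy, rfl⟩ := hdecomp u
  rcases eq_or_ne y 0 with rfl | hy0
  · rw [add_zero, sup_eq_right.2 ((span_singleton_le_iff_mem _ _).2 hv₀)]
    exact ⟨P, hsup, horth⟩
  obtain ⟨j, hyj, hj⟩ := he.exists_pivot hN hy0
  have hyP : ∀ p ∈ P, e.repr y p = 0 := e.mem_coordKer.1 hy
  refine ⟨insert j P, eq_top_iff'.2 fun x => ?_, hN.areOrthogonal_of_le_add fun v hv z hz => ?_⟩
  · obtain ⟨v, hv, z, hz, rfl⟩ := hdecomp x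
    have hzP : ∀ p ∈ P, e.repr z p = 0 := e.mem_coordKer.1 hz
    set c := e.repr z j / e.repr y j
    refine mem_sup.2 ⟨c • (v₀ + y) + (v - c • v₀), ?_, z - c • y, ?_, by module⟩
    · exact add_mem (mem_sup_left (mem_span_singleton.2 ⟨c, rfl⟩))
        (mem_sup_right (sub_mem hv (W.smul_mem c hv₀)))
    · rw [e.mem_coordKer, Finset.forall_mem_insert]
      refine ⟨by simp [c, hyj], fun p hp => by simp [hzP p hp, hyP p hp]⟩
  · obtain ⟨a, ha, b, hb, rfl⟩ := mem_sup.1 hv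
    obtain ⟨t, rfl⟩ := mem_span_singleton.1 ha
    rw [e.mem_coordKer, Finset.forall_mem_insert] at hz
    have hzty : z + t • y ∈ e.coordKer P :=
      add_mem (e.mem_coordKer.2 hz.2) ((e.coordKer P).smul_mem t hy)
    calc ℓ z ≤ ℓ (z + t • y) := he.le_add_smul_of_pivot hN hj hz.1 t
      _ ≤ max (ℓ (t • v₀ + b)) (ℓ (z + t • y)) := le_max_right _ _
      _ = ℓ (t • v₀ + b + (z + t • y)) := (horth _ (add_mem (W.smul_mem t hv₀) hb) _ hzty).symm
      _ = ℓ (t • (v₀ + y) + b + z) := by congr 1; module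

theorem exists_coordKer_complement_span_finset (s : Finset C) :
    ∃ P : Finset ι, span Λ (s : Set C) ⊔ e.coordKer P = ⊤ ∧
      AreOrthogonal ℓ (span Λ (s : Set C)) (e.coordKer P) := by
  classical
  induction s using Finset.induction_on with
  | empty =>
    refine ⟨∅, by simp [Module.Basis.coordKer], hN.areOrthogonal_of_le_add fun v hv w _ => ?_⟩
    simp_all
  | insert u s _ ih =>
    obtain ⟨P, hsup, horth⟩ := ih
    rw [Finset.coe_insert, span_insert]
    exact exists_coordKer_complement_sup_span_singleton hN he hsup horth u

theorem exists_areOrthogonal_sup_eq_top (W : Submodule Λ C) :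
    ∃ E : Submodule Λ C, W ⊔ E = ⊤ ∧ AreOrthogonal ℓ W E := by
  have := Module.Finite.of_basis e
  obtain ⟨s, rfl⟩ := IsNoetherian.noetherian W
  obtain ⟨P, hP⟩ := exists_coordKer_complement_span_finset hN he s
  exact ⟨_, hP⟩

theorem exists_mem_forall_le_sub_add (W : Submodule Λ C) (x : C) :
    ∃ v₀ ∈ W, ∀ u ∈ W, ℓ (x - v₀) ≤ ℓ (x - v₀ + u) := by
  obtain ⟨E, hsup, horth⟩ := exists_areOrthogonal_sup_eq_top hN he W
  obtain ⟨v₀, hv₀, y, hy, rfl⟩ := mem_sup.1 (hsup ▸ mem_top : x ∈ W ⊔ E)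
  refine ⟨v₀, hv₀, fun u hu => ?_⟩
  rw [add_sub_cancel_left, add_comm, horth u hu y hy]
  exact le_max_right _ _

end Complement

theorem IsOrthFamily.snoc (hN : IsNonArchNorm NS ℓ) {k : ℕ} {w : Fin k → C}
    (hw : IsOrthFamily Λ ℓ w) {y : C} (hy : ∀ u ∈ span Λ (range w), ℓ y ≤ ℓ (y + u)) :
    IsOrthFamily Λ ℓ (Fin.snoc w y : Fin (k + 1) → C) := by
  rw [hN.isOrthFamily_iff]
  intro a i
  have horth := hN.areOrthogonal_span_singleton hy
    (∑ i, a i.castSucc • w i) (sum_mem fun i _ => smul_mem _ _ (subset_span (mem_range_self i)))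
    (a (Fin.last k) • y) (smul_mem _ _ (mem_span_singleton_self y))
  rw [Fin.sum_univ_castSucc]
  simp only [Fin.snoc_castSucc, Fin.snoc_last, horth]
  induction i using Fin.lastCases with
  | last => simp
  | cast i => simpa using le_max_of_le_left (hw.le_sum (fun i => a i.castSucc) i)

theorem isOrthFamily_of_forall_le_add (hN : IsNonArchNorm NS ℓ) {r : ℕ} (y : Fin r → C)
    (h : ∀ j, ∀ u ∈ span Λ (y '' Iio j), ℓ (y j) ≤ ℓ (y j + u)) : IsOrthFamily Λ ℓ y := by
  induction r with
  | zero => intro a; simp [hN.map_zero]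
  | succ r ih =>
    rw [← Fin.snoc_init_self y]
    refine (ih _ fun j u hu => h j.castSucc u ?_).snoc hN fun u hu => h (Fin.last r) u ?_
    · rwa [← Fin.image_castSucc_Iio, image_image]
    · have hlast : Iio (Fin.last r) = range Fin.castSucc := by ext i; simp [Fin.lt_def]
      rwa [hlast, ← range_comp]

theorem IsOrthFamily.le_add_of_mem_span_compl {ι : Type*} [Fintype ι] {w : ι → C}
    (hw : IsOrthFamily Λ ℓ w) {j : ι} {u : C} (hu : u ∈ span Λ (w '' {j}ᶜ)) :
    ℓ (w j) ≤ ℓ (w j + u) := by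
  classical
  obtain ⟨c, hc, rfl⟩ := exists_sum_eq_of_mem_span_image hu
  have h := hw.le_sum (Pi.single j 1 + c) j
  simp only [Pi.add_apply, Pi.single_eq_same, hc j (by simp), add_zero, one_smul] at h
  simpa [add_smul, Finset.sum_add_distrib, Pi.single_apply] using h

theorem IsOrthFamily.le_add_of_mem_span_image_Iio {r i : ℕ} {x : Fin r → C}
    (hi : IsOrthFamily Λ ℓ (fun j : {j : Fin r // (j : ℕ) < i} => x j)) {j : Fin r}
    (hj : (j : ℕ) < i) {u : C} (hu : u ∈ span Λ (x '' Iio j)) : ℓ (x j) ≤ ℓ (x j + u) := by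
  refine hi.le_add_of_mem_span_compl (j := ⟨j, hj⟩) (span_mono ?_ hu)
  rintro _ ⟨b, hb, rfl⟩
  exact ⟨⟨b, lt_trans hb hj⟩, fun h => hb.ne (congrArg Subtype.val h), rfl⟩

end NonArchimedean

/-- Theorem 2.16, non-Archimedean Gram–Schmidt: if `(C, ℓ)` is an
orthogonalizable `Λ`-space and `x₁, …, x_r` is a basis for a subspace `V ≤ C`, then there is
an orthogonal ordered basis `x₁', …, x_r'` of `V` with `x_j' = x_j - ∑_{β < j} λ_{j,β} x_β`;
moreover if `(x₁, …, x_i)` is orthogonal then one can take `x_j' = x_j` for `j ≤ i`. -/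
theorem nonarchimedean_gram_schmidt
    {Γ : AddSubgroup ℝ} {Λ : Type*} [Field Λ] (NS : NovikovStructure Γ Λ)
    {C : Type*} [AddCommGroup C] [Module Λ C] {ℓ : C → EReal}
    (hC : IsOrthogonalizable NS ℓ)
    {r : ℕ} (x : Fin r → C) (hx : LinearIndependent Λ x) (i : ℕ)
    (hi : IsOrthFamily Λ ℓ (fun j : {j : Fin r // (j : ℕ) < i} => x j)) :
    ∃ x' : Fin r → C,
      IsOrthFamily Λ ℓ x' ∧
      LinearIndependent Λ x' ∧
      Submodule.span Λ (Set.range x') = Submodule.span Λ (Set.range x) ∧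
      (∀ j : Fin r, (j : ℕ) < i → x' j = x j) ∧
      (∀ j : Fin r, ∃ lam : Fin r → Λ,
        x' j = x j - ∑ b : Fin r, if (b : ℕ) < (j : ℕ) then lam b • x b else 0) := by
  obtain ⟨hN, n, e, he⟩ := hC
  have hbest : ∀ j : Fin r, ∃ v ∈ span Λ (x '' Iio j), ((j : ℕ) < i → v = 0) ∧
      ∀ u ∈ span Λ (x '' Iio j), ℓ (x j - v) ≤ ℓ (x j - v + u) := by
    intro j
    by_cases hj : (j : ℕ) < i
    · exact ⟨0, zero_mem _, fun _ => rfl, fun u hu => by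
        simpa only [sub_zero] using hi.le_add_of_mem_span_image_Iio hj hu⟩
    · obtain ⟨v, hv, hmin⟩ := exists_mem_forall_le_sub_add hN he _ (x j)
      exact ⟨v, hv, fun h => absurd h hj, hmin⟩
  choose v hvW hv0 hvmin using hbest
  have htri : ∀ j, (x j - v j) - x j ∈ span Λ (x '' Iio j) := fun j => by
    rw [sub_sub_cancel_left]
    exact neg_mem (hvW j)
  have hspan := span_range_eq_of_sub_mem htri
  refine ⟨fun j => x j - v j, isOrthFamily_of_forall_le_add hN _ fun j u hu => hvmin j u ?_,
    ?_, hspan, fun j hj => by simp [hv0 j hj], fun j => ?_⟩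
  · rwa [span_image_Iio_eq_of_sub_mem htri] at hu
  · rw [linearIndependent_iff_card_eq_finrank_span] at hx ⊢
    rw [hx, Set.finrank, Set.finrank, hspan]
  · obtain ⟨lam, hlam⟩ := exists_eq_sum_ite_of_mem_span_image_Iio (hvW j)
    exact ⟨lam, by rw [← hlam]⟩
end
end

section
/- Let (C_1 →∂ C_0) be a two-term Floer-type complex over Λ with singular value decomposition ((y_1, …, y_n), (x_1, …, x_m)) for ∂, and let r = rank ∂. If x = Σ_{i=1}^{r} λ_i x_i is any element of Im ∂ (λ_i ∈ Λ) and y ∈ C_1 satisfies ∂y = x, then ℓ(y) ≥ ℓ(Σ_{i=1}^{r} λ_i y_i) = max{ℓ(y_i) − ν(λ_i) : 1 ≤ i ≤ r}. -/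
/-!
Formalization setup following Usher–Zhang, "Persistent homology and Floer–Novikov theory".

We fix an additive subgroup `Γ ≤ ℝ` and abstract the Novikov field `Λ = Λ^{K,Γ}` as a field
`Λ` equipped with a valuation `ν : Λ → ℝ ∪ {∞}` (encoded in `EReal`, with `ν x = ⊤ ↔ x = 0`)
satisfying (V1),(V2),(V3), whose values on nonzero elements lie in (and fill out) `Γ`.

Filtration functions `ℓ : C → ℝ ∪ {-∞}` are encoded as `EReal`-valued functions which never
take the value `⊤`, with `ℓ x = ⊥ ↔ x = 0`.
-/

noncomputable section

/-- A singular value decomposition (Definition 3.1) of a linear map `A : C → D` between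
orthogonalizable `Λ`-spaces: orthogonal ordered bases `(y₁,…,yₙ)` of `C` and `(x₁,…,xₘ)`
of `D` such that `(y_{r+1},…,yₙ)` is an orthogonal ordered basis of `ker A`,
`(x₁,…,x_r)` is an orthogonal ordered basis of `Im A`, `A yᵢ = xᵢ` for `i ≤ r`, and
`ℓ_C(y₁) - ℓ_D(x₁) ≥ … ≥ ℓ_C(y_r) - ℓ_D(x_r)`; here `r` is the rank of `A`. -/
def IsSVD {Λ : Type*} [Field Λ] {C D : Type*} [AddCommGroup C] [Module Λ C]
    [AddCommGroup D] [Module Λ D] (ℓC : C → EReal) (ℓD : D → EReal) (A : C →ₗ[Λ] D)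
    {r n m : ℕ} (hrn : r ≤ n) (hrm : r ≤ m)
    (y : Module.Basis (Fin n) Λ C) (x : Module.Basis (Fin m) Λ D) : Prop :=
  IsOrthFamily Λ ℓC ⇑y ∧
  IsOrthFamily Λ ℓD ⇑x ∧
  (∀ i : Fin r, A (y (Fin.castLE hrn i)) = x (Fin.castLE hrm i)) ∧
  (∀ i : Fin n, r ≤ (i : ℕ) → A (y i) = 0) ∧
  LinearMap.ker A = Submodule.span Λ (⇑y '' {i : Fin n | r ≤ (i : ℕ)}) ∧
  LinearMap.range A = Submodule.span Λ (⇑x '' {i : Fin m | (i : ℕ) < r}) ∧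
  (∀ i j : Fin r, i ≤ j →
    ℓC (y (Fin.castLE hrn j)) - ℓD (x (Fin.castLE hrm j)) ≤
      ℓC (y (Fin.castLE hrn i)) - ℓD (x (Fin.castLE hrm i)))

/-!
Writing `w = ∑_{i ≤ r} λᵢ yᵢ`, the difference `y - w` lies in `ker ∂`, which is spanned by the
basis vectors `y_{r+1}, …, yₙ`. Since `(y₁, …, yₙ)` is orthogonal, the spans of disjoint parts of
it are orthogonal subspaces, so `ℓ(y) = ℓ(w + (y - w)) = max (ℓ(w), ℓ(y - w)) ≥ ℓ(w)`; and
orthogonality of the subfamily `(y₁, …, y_r)` computes `ℓ(w)`.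
-/

theorem exists_eq_sum_smul_of_mem_span_image {R M ι : Type*} [Semiring R] [AddCommMonoid M]
    [Module R M] [Fintype ι] {w : ι → M} {s : Set ι} {v : M}
    (hv : v ∈ Submodule.span R (w '' s)) :
    ∃ a : ι → R, (∀ i ∉ s, a i = 0) ∧ v = ∑ i, a i • w i := by
  obtain ⟨l, hl, rfl⟩ := (Finsupp.mem_span_image_iff_linearCombination R).mp hv
  refine ⟨l, (Finsupp.mem_supported' R l).mp hl, ?_⟩
  rw [Finsupp.linearCombination_apply, Finsupp.sum_fintype _ _ fun i => zero_smul R (w i)]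

section

variable {Γ : AddSubgroup ℝ} {Λ : Type*} [Field Λ] {NS : NovikovStructure Γ Λ}
  {C : Type*} [AddCommGroup C] [Module Λ C] {ℓ : C → EReal}

theorem IsNonArchNorm.map_zero_s7 (hℓ : IsNonArchNorm NS ℓ) : ℓ 0 = ⊥ :=
  (hℓ.eq_bot_iff 0).mpr rfl

theorem IsNonArchNorm.add_smul_eq_max_of_eq_zero_or_eq_zero (hℓ : IsNonArchNorm NS ℓ)
    {a b : Λ} (v : C) (hab : a = 0 ∨ b = 0) : ℓ ((a + b) • v) = max (ℓ (a • v)) (ℓ (b • v)) := by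
  rcases hab with rfl | rfl <;> simp [hℓ.map_zero_s7]

namespace IsOrthFamily

variable {ι κ : Type*} [Fintype ι] [Fintype κ] {w : ι → C}

theorem comp_injective (hℓ : IsNonArchNorm NS ℓ) (hw : IsOrthFamily Λ ℓ w) {f : κ → ι}
    (hf : Function.Injective f) : IsOrthFamily Λ ℓ (w ∘ f) := by
  intro a
  set a' : ι → Λ := Function.extend f a 0
  have ha'_comp : ∀ k, a' (f k) = a k := hf.extend_apply a 0
  have ha' : ∀ i ∉ Set.range f, a' i = 0 := fun i hi =>
    Function.extend_apply' _ _ _ fun ⟨k, hk⟩ => hi ⟨k, hk⟩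
  have hsum : ∑ k, a k • (w ∘ f) k = ∑ i, a' i • w i :=
    Fintype.sum_of_injective f hf _ _ (fun i hi => by rw [ha' i hi, zero_smul])
      (fun k => by rw [Function.comp_apply, ha'_comp])
  rw [hsum, hw a']
  refine le_antisymm (iSup_le fun i => ?_) (iSup_le fun k => ?_)
  · by_cases hi : i ∈ Set.range f
    · obtain ⟨k, rfl⟩ := hi
      rw [ha'_comp]
      exact le_iSup (fun k => ℓ (a k • (w ∘ f) k)) k
    · rw [ha' i hi, zero_smul, hℓ.map_zero_s7]
      exact bot_le
  · rw [Function.comp_apply, ← ha'_comp]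
    exact le_iSup (fun i => ℓ (a' i • w i)) (f k)

theorem areOrthogonal_span_image (hℓ : IsNonArchNorm NS ℓ) (hw : IsOrthFamily Λ ℓ w)
    {s t : Set ι} (hst : Disjoint s t) :
    AreOrthogonal ℓ (Submodule.span Λ (w '' s)) (Submodule.span Λ (w '' t)) := by
  intro v hv u hu
  obtain ⟨a, ha, rfl⟩ := exists_eq_sum_smul_of_mem_span_image hv
  obtain ⟨b, hb, rfl⟩ := exists_eq_sum_smul_of_mem_span_image hu
  have hdisj : ∀ i, a i = 0 ∨ b i = 0 := fun i => by
    by_cases hi : i ∈ s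
    · exact Or.inr (hb i (hst.notMem_of_mem_left hi))
    · exact Or.inl (ha i hi)
  simp only [← Finset.sum_add_distrib, ← add_smul, hw _,
    hℓ.add_smul_eq_max_of_eq_zero_or_eq_zero _ (hdisj _)]
  exact iSup_sup_eq

end IsOrthFamily

end

theorem svd_minimal_preimage_general
    {Γ : AddSubgroup ℝ} {Λ : Type*} [Field Λ] (NS : NovikovStructure Γ Λ)
    {C1 C0 : Type*} [AddCommGroup C1] [Module Λ C1] [AddCommGroup C0] [Module Λ C0]
    {ℓ1 : C1 → EReal} {ℓ0 : C0 → EReal}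
    (h1 : IsOrthogonalizable NS ℓ1)
    (bd : C1 →ₗ[Λ] C0)
    {r n m : ℕ} (hrn : r ≤ n) (hrm : r ≤ m)
    (y : Module.Basis (Fin n) Λ C1) (x : Module.Basis (Fin m) Λ C0)
    (hsvd : IsSVD ℓ1 ℓ0 bd hrn hrm y x)
    (c : Fin r → Λ) (z : C1)
    (hz : bd z = ∑ i : Fin r, c i • x (Fin.castLE hrm i)) :
    ℓ1 (∑ i : Fin r, c i • y (Fin.castLE hrn i)) ≤ ℓ1 z ∧
    ℓ1 (∑ i : Fin r, c i • y (Fin.castLE hrn i)) =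
      ⨆ i : Fin r, (ℓ1 (y (Fin.castLE hrn i)) - NS.ν (c i)) := by
  obtain ⟨hℓ1, -⟩ := h1
  obtain ⟨horth, -, hbd_y, -, hker, -, -⟩ := hsvd
  set w := ∑ i : Fin r, c i • y (Fin.castLE hrn i)
  have hw : w ∈ Submodule.span Λ (y '' {i | (i : ℕ) < r}) :=
    Submodule.sum_mem _ fun i _ => Submodule.smul_mem _ _
      (Submodule.subset_span ⟨_, i.isLt, rfl⟩)
  have hzw : z - w ∈ Submodule.span Λ (y '' {i | r ≤ (i : ℕ)}) := by
    rw [← hker, LinearMap.mem_ker, map_sub, hz, map_sum]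
    simp only [map_smul, hbd_y, sub_self]
  have hdisj : Disjoint {i : Fin n | (i : ℕ) < r} {i | r ≤ (i : ℕ)} :=
    Set.disjoint_left.mpr fun _ hi hi' => (Nat.not_le.mpr hi) hi'
  refine ⟨?_, ?_⟩
  · calc ℓ1 w ≤ max (ℓ1 w) (ℓ1 (z - w)) := le_max_left _ _
      _ = ℓ1 (w + (z - w)) := (horth.areOrthogonal_span_image hℓ1 hdisj w hw _ hzw).symm
      _ = ℓ1 z := by rw [add_sub_cancel]
  · exact (horth.comp_injective hℓ1 (Fin.castLE_injective hrn) c).trans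
      (iSup_congr fun i => hℓ1.smul_eq _ _)

/-- Lemma 4.7: in a two-term Floer-type complex `(C₁ → C₀)` with singular
value decomposition `((y₁,…,yₙ), (x₁,…,xₘ))` of `∂` of rank `r`, if `∂ y = ∑_{i≤r} λᵢ xᵢ`
then `ℓ(y) ≥ ℓ(∑_{i≤r} λᵢ yᵢ) = max {ℓ(yᵢ) - ν(λᵢ)}`. -/
theorem svd_minimal_preimage
    {Γ : AddSubgroup ℝ} {Λ : Type*} [Field Λ] (NS : NovikovStructure Γ Λ)
    {C1 C0 : Type*} [AddCommGroup C1] [Module Λ C1] [AddCommGroup C0] [Module Λ C0]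
    {ℓ1 : C1 → EReal} {ℓ0 : C0 → EReal}
    (h1 : IsOrthogonalizable NS ℓ1) (h0 : IsOrthogonalizable NS ℓ0)
    (bd : C1 →ₗ[Λ] C0) (hbd : ∀ z : C1, ℓ0 (bd z) ≤ ℓ1 z)
    {r n m : ℕ} (hrn : r ≤ n) (hrm : r ≤ m)
    (y : Module.Basis (Fin n) Λ C1) (x : Module.Basis (Fin m) Λ C0)
    (hsvd : IsSVD ℓ1 ℓ0 bd hrn hrm y x)
    (c : Fin r → Λ) (z : C1)
    (hz : bd z = ∑ i : Fin r, c i • x (Fin.castLE hrm i)) :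
    ℓ1 (∑ i : Fin r, c i • y (Fin.castLE hrn i)) ≤ ℓ1 z ∧
    ℓ1 (∑ i : Fin r, c i • y (Fin.castLE hrn i)) =
      ⨆ i : Fin r, (ℓ1 (y (Fin.castLE hrn i)) - NS.ν (c i)) :=
  svd_minimal_preimage_general NS h1 bd hrn hrm y x hsvd c z hz
end
end

section
/- Let (C, ℓ) be an orthogonalizable Λ^{K,Γ}-space with orthogonal ordered basis (v_1, …, v_n), and for s ∈ ℝ/Γ let μ(s) = #{i : ℓ(v_i) ≡ s mod Γ} (the multiplicity of s in the filtration spectrum). Then for every s ∈ ℝ/Γ, μ(s) = max{k ∈ ℕ : there exists a subspace V ≤ C with dim V = k such that every v ∈ V ∖ {0} satisfies ℓ(v) ≡ s mod Γ}. In particular the filtration spectrum is independent of the choice of orthogonal basis. -/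
/-!
Formalization setup following Usher–Zhang, "Persistent homology and Floer–Novikov theory".

We fix an additive subgroup `Γ ≤ ℝ` and abstract the Novikov field `Λ = Λ^{K,Γ}` as a field
`Λ` equipped with a valuation `ν : Λ → ℝ ∪ {∞}` (encoded in `EReal`, with `ν x = ⊤ ↔ x = 0`)
satisfying (V1),(V2),(V3), whose values on nonzero elements lie in (and fill out) `Γ`.

Filtration functions `ℓ : C → ℝ ∪ {-∞}` are encoded as `EReal`-valued functions which never
take the value `⊤`, with `ℓ x = ⊥ ↔ x = 0`.
-/

noncomputable section

/-!
Orthogonality makes `ℓ w` equal to `ℓ (cⱼ • vⱼ) = ℓ vⱼ - ν cⱼ` for some basis vector `vⱼ` with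
`cⱼ ≠ 0`, and `ν cⱼ ∈ Γ`; so the level of every nonzero vector is, mod `Γ`, the level of a basis
vector occurring in it. Hence the span of the basis vectors of level `s` has all nonzero levels
`≡ s`, while on a subspace with that property the coordinates along those basis vectors are
injective, bounding its dimension by their number.
-/

/-- Since `(⊥ : EReal).toReal = 0`, the zero vector gets `levelMod Γ ℓ 0 = 0`. -/
def levelMod (Γ : AddSubgroup ℝ) {C : Type*} (ℓ : C → EReal) (x : C) : ℝ ⧸ Γ :=
  QuotientAddGroup.mk (ℓ x).toReal

theorem Module.Basis.finrank_span_image {R M ι : Type*} [Ring R] [StrongRankCondition R]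
    [AddCommGroup M] [Module R M] [Finite ι] (v : Module.Basis ι R M) (S : Set ι) :
    Module.finrank R (Submodule.span R (v '' S)) = Nat.card S := by
  have := nontrivial_of_invariantBasisNumber R
  have := Fintype.ofFinite S
  rw [Set.image_eq_range, Nat.card_eq_fintype_card]
  exact finrank_span_eq_card (v.linearIndependent.comp _ Subtype.val_injective)

section

variable {Γ : AddSubgroup ℝ} {Λ : Type*} [Field Λ] {NS : NovikovStructure Γ Λ}
  {C : Type*} [AddCommGroup C] [Module Λ C] {ℓ : C → EReal}

theorem IsNonArchNorm.levelMod_smul (hna : IsNonArchNorm NS ℓ) {a : Λ} (ha : a ≠ 0) (x : C) :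
    levelMod Γ ℓ (a • x) = levelMod Γ ℓ x := by
  rcases eq_or_ne x 0 with rfl | hx
  · rw [smul_zero]
  obtain ⟨g, hg⟩ := NS.ν_mem a ha
  have hreal : ℓ x = ((ℓ x).toReal : EReal) :=
    (EReal.coe_toReal (hna.ne_top x) (mt (hna.eq_bot_iff x).1 hx)).symm
  have hsmul : ℓ (a • x) = (((ℓ x).toReal - g : ℝ) : EReal) := by
    rw [hna.smul_eq, hg, hreal, EReal.toReal_coe, EReal.coe_sub]
  rw [levelMod, levelMod, hsmul, EReal.toReal_coe, QuotientAddGroup.mk_sub,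
    (QuotientAddGroup.eq_zero_iff (g : ℝ)).2 g.2, sub_zero]

theorem IsNonArchNorm.exists_repr_ne_zero_levelMod_eq (hna : IsNonArchNorm NS ℓ) {ι : Type*} [Fintype ι]
    {v : Module.Basis ι Λ C} (hv : IsOrthFamily Λ ℓ ⇑v) {w : C} (hw : w ≠ 0) :
    ∃ j, v.repr w j ≠ 0 ∧ levelMod Γ ℓ w = levelMod Γ ℓ (v j) := by
  have : Nonempty ι := by
    obtain ⟨j, -⟩ := Finsupp.ne_iff.1 (v.repr.map_ne_zero_iff.2 hw)
    exact ⟨j⟩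
  obtain ⟨j, hj⟩ := exists_eq_ciSup_of_finite (f := fun i => ℓ (v.repr w i • v i))
  have hw_eq : ℓ w = ℓ (v.repr w j • v j) := by
    rw [hj, ← hv, v.sum_repr]
  have hcoeff : v.repr w j ≠ 0 := by
    intro h
    rw [h, zero_smul, (hna.eq_bot_iff 0).2 rfl, hna.eq_bot_iff] at hw_eq
    exact hw hw_eq
  refine ⟨j, hcoeff, ?_⟩
  rw [← hna.levelMod_smul hcoeff (v j)]
  simp only [levelMod, hw_eq]

theorem IsNonArchNorm.exists_mem_levelMod_eq_of_mem_span (hna : IsNonArchNorm NS ℓ) {ι : Type*} [Fintype ι]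
    {v : Module.Basis ι Λ C} (hv : IsOrthFamily Λ ℓ ⇑v) {S : Set ι} {w : C}
    (hwS : w ∈ Submodule.span Λ (v '' S)) (hw : w ≠ 0) :
    ∃ j ∈ S, levelMod Γ ℓ w = levelMod Γ ℓ (v j) := by
  obtain ⟨j, hcoeff, hj⟩ := hna.exists_repr_ne_zero_levelMod_eq hv hw
  exact ⟨j, v.mem_span_image.1 hwS (Finsupp.mem_support_iff.2 hcoeff), hj⟩

theorem IsNonArchNorm.finrank_le_card_of_levelMod_eq (hna : IsNonArchNorm NS ℓ) {ι : Type*} [Fintype ι]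
    {v : Module.Basis ι Λ C} (hv : IsOrthFamily Λ ℓ ⇑v) {s : ℝ ⧸ Γ} {V : Submodule Λ C}
    (hV : ∀ w ∈ V, w ≠ 0 → levelMod Γ ℓ w = s) :
    Module.finrank Λ V ≤ Nat.card {i : ι // levelMod Γ ℓ (v i) = s} := by
  classical
  let coords : V →ₗ[Λ] ({i : ι // levelMod Γ ℓ (v i) = s} → Λ) :=
    (LinearMap.pi fun i : {i : ι // levelMod Γ ℓ (v i) = s} => v.coord i).comp V.subtype
  have hinj : Function.Injective coords := by
    rw [← LinearMap.ker_eq_bot, LinearMap.ker_eq_bot']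
    intro w hw
    by_contra hw0
    have hw0 : (w : C) ≠ 0 := by simpa using hw0
    obtain ⟨j, hcoeff, hj⟩ := hna.exists_repr_ne_zero_levelMod_eq hv hw0
    exact hcoeff (by simpa [coords] using congrFun hw ⟨j, hj ▸ hV w w.2 hw0⟩)
  rw [Nat.card_eq_fintype_card, ← Module.finrank_fintype_fun_eq_card (R := Λ)]
  exact LinearMap.finrank_le_finrank_of_injective hinj

end

/-- Proposition 5.5: for an orthogonalizable `Λ^{K,Γ}`-space `(C, ℓ)` with
orthogonal ordered basis `(v₁, …, vₙ)`, the multiplicity `μ(s) = #{i : ℓ(vᵢ) ≡ s mod Γ}` of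
any `s ∈ ℝ/Γ` in the filtration spectrum equals the maximal dimension of a subspace all of
whose nonzero elements have filtration level congruent to `s` mod `Γ`; in particular the
filtration spectrum does not depend on the choice of orthogonal basis. -/
theorem filtration_spectrum_multiplicity
    {Γ : AddSubgroup ℝ} {Λ : Type*} [Field Λ] (NS : NovikovStructure Γ Λ)
    {C : Type*} [AddCommGroup C] [Module Λ C] {ℓ : C → EReal}
    (hna : IsNonArchNorm NS ℓ) {n : ℕ} (v : Module.Basis (Fin n) Λ C)
    (hv : IsOrthFamily Λ ℓ ⇑v) (s : ℝ ⧸ Γ) :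
    Nat.card {i : Fin n // (QuotientAddGroup.mk ((ℓ (v i)).toReal) : ℝ ⧸ Γ) = s} =
      sSup {k : ℕ | ∃ V : Submodule Λ C, Module.finrank Λ ↥V = k ∧
        ∀ w ∈ V, w ≠ 0 → (QuotientAddGroup.mk ((ℓ w).toReal) : ℝ ⧸ Γ) = s} := by
  refine (IsGreatest.csSup_eq ⟨?_, ?_⟩).symm
  · refine ⟨Submodule.span Λ (v '' {i | levelMod Γ ℓ (v i) = s}), v.finrank_span_image _,
      fun w hwS hw => ?_⟩
    obtain ⟨j, hj, hw_eq⟩ := hna.exists_mem_levelMod_eq_of_mem_span hv hwS hw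
    exact hw_eq.trans hj
  · rintro k ⟨V, rfl, hV⟩
    exact hna.finrank_le_card_of_levelMod_eq hv hV
end
end
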